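/- arXiv:math/0610369 — 2 statements merged into one kernel-verified Lean document; each statement's English description precedes it below -/
import Mathlib

section
/- Let N be a finite set. Suppose that for every subset I ⊆ N a set X_I is given, and for every pair of subsets K ⊆ I a subset X_{I,K} ⊆ X_I and a map φ_{I,K} : X_{I,K} → X_K are given, satisfying: (0) X_{I,I} = X_I and φ_{I,I} is the identity map of X_I; (1) if K' ⊆ K ⊆ I then X_{I,K} ⊆ X_{I,K'}; (2) if K' ⊆ K ⊆ I and x ∈ X_{I,K}, then φ_{I,K}(x) ∈ X_{K,K'} and φ_{I,K'}(x) = φ_{K,K'}(φ_{I,K}(x)). Define a relation ∼ on the disjoint union ⨆_{I⊆N} X_I by declaring x ∈ X_I related to y ∈ X_J if and only if there exists K ⊆ I ∩ J with x ∈ X_{I,K}, y ∈ X_{J,K}, and φ_{I,K}(x) = φ_{J,K}(y). Then ∼ is an equivalence relation; in particular, if x ∈ X_I, y ∈ X_J, z ∈ X_K satisfy x ∼ y and y ∼ z, then x ∼ z. -/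
/-! Two patches that agree after restriction to `K` still agree after restriction to any
`K' ⊆ K`, by the cocycle identity. So if `x ∼ y` over `K₁` and `y ∼ z` over `K₂`, all three
agree over `K₁ ∩ K₂`, which gives transitivity; reflexivity is witnessed by `K = I`. -/

section Patching

variable {N : Type*} [DecidableEq N] {X : Finset N → Type*}
  (D : ∀ I _K : Finset N, Set (X I)) (φ : ∀ I K : Finset N, X I → X K)

def PatchedAt (K : Finset N) {I J : Finset N} (x : X I) (y : X J) : Prop :=
  K ⊆ I ∩ J ∧ x ∈ D I K ∧ y ∈ D J K ∧ φ I K x = φ J K y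

variable {D φ}

theorem patchedAt_self {I : Finset N} (hI : D I I = Set.univ) (x : X I) :
    PatchedAt D φ I x x := by
  simp [PatchedAt, hI]

theorem PatchedAt.symm {K I J : Finset N} {x : X I} {y : X J} (h : PatchedAt D φ K x y) :
    PatchedAt D φ K y x :=
  ⟨Finset.inter_comm I J ▸ h.1, h.2.2.1, h.2.1, h.2.2.2.symm⟩

theorem PatchedAt.mono
    (h1 : ∀ I K K' : Finset N, K' ⊆ K → K ⊆ I → D I K ⊆ D I K')
    (h2 : ∀ I K K' : Finset N, K' ⊆ K → K ⊆ I → ∀ x ∈ D I K,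
      φ I K x ∈ D K K' ∧ φ I K' x = φ K K' (φ I K x))
    {K K' I J : Finset N} {x : X I} {y : X J} (h : PatchedAt D φ K x y) (hK' : K' ⊆ K) :
    PatchedAt D φ K' x y := by
  obtain ⟨hK, hx, hy, hxy⟩ := h
  have hKI : K ⊆ I := hK.trans Finset.inter_subset_left
  have hKJ : K ⊆ J := hK.trans Finset.inter_subset_right
  refine ⟨hK'.trans hK, h1 I K K' hK' hKI hx, h1 J K K' hK' hKJ hy, ?_⟩
  calc φ I K' x = φ K K' (φ I K x) := (h2 I K K' hK' hKI x hx).2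
    _ = φ K K' (φ J K y) := by rw [hxy]
    _ = φ J K' y := (h2 J K K' hK' hKJ y hy).2.symm

theorem PatchedAt.trans
    (h1 : ∀ I K K' : Finset N, K' ⊆ K → K ⊆ I → D I K ⊆ D I K')
    (h2 : ∀ I K K' : Finset N, K' ⊆ K → K ⊆ I → ∀ x ∈ D I K,
      φ I K x ∈ D K K' ∧ φ I K' x = φ K K' (φ I K x))
    {K₁ K₂ I J K : Finset N} {x : X I} {y : X J} {z : X K}
    (hxy : PatchedAt D φ K₁ x y) (hyz : PatchedAt D φ K₂ y z) :
    PatchedAt D φ (K₁ ∩ K₂) x z := by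
  obtain ⟨hK₁, hx, -, hxy⟩ := hxy.mono h1 h2 Finset.inter_subset_left
  obtain ⟨hK₂, -, hz, hyz⟩ := hyz.mono h1 h2 Finset.inter_subset_right
  exact ⟨Finset.subset_inter (hK₁.trans Finset.inter_subset_left)
    (hK₂.trans Finset.inter_subset_right), hx, hz, hxy.trans hyz⟩

end Patching

theorem patchable_rel_equivalence_general {N : Type*} [DecidableEq N]
    (X : Finset N → Type*)
    (D : ∀ _I _K : Finset N, Set (X _I))
    (φ : ∀ _I _K : Finset N, X _I → X _K)
    (h0 : ∀ I : Finset N, D I I = Set.univ ∧ ∀ x : X I, φ I I x = x)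
    (h1 : ∀ I K K' : Finset N, K' ⊆ K → K ⊆ I → D I K ⊆ D I K')
    (h2 : ∀ I K K' : Finset N, K' ⊆ K → K ⊆ I → ∀ x ∈ D I K,
      φ I K x ∈ D K K' ∧ φ I K' x = φ K K' (φ I K x)) :
    Equivalence (fun p q : (I : Finset N) × X I =>
      ∃ K : Finset N, K ⊆ p.1 ∩ q.1 ∧ p.2 ∈ D p.1 K ∧ q.2 ∈ D q.1 K ∧
        φ p.1 K p.2 = φ q.1 K q.2) ∧
    (∀ (I J K : Finset N) (x : X I) (y : X J) (z : X K),
      (∃ K₁ : Finset N, K₁ ⊆ I ∩ J ∧ x ∈ D I K₁ ∧ y ∈ D J K₁ ∧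
          φ I K₁ x = φ J K₁ y) →
      (∃ K₂ : Finset N, K₂ ⊆ J ∩ K ∧ y ∈ D J K₂ ∧ z ∈ D K K₂ ∧
          φ J K₂ y = φ K K₂ z) →
      (∃ K₃ : Finset N, K₃ ⊆ I ∩ K ∧ x ∈ D I K₃ ∧ z ∈ D K K₃ ∧
          φ I K₃ x = φ K K₃ z)) := by
  have trans {I J K : Finset N} {x : X I} {y : X J} {z : X K} :
      (∃ K₁, PatchedAt D φ K₁ x y) → (∃ K₂, PatchedAt D φ K₂ y z) →
        ∃ K₃, PatchedAt D φ K₃ x z :=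
    fun ⟨K₁, hxy⟩ ⟨K₂, hyz⟩ => ⟨K₁ ∩ K₂, hxy.trans h1 h2 hyz⟩
  exact ⟨⟨fun p => ⟨p.1, patchedAt_self (h0 p.1).1 p.2⟩, fun ⟨K, h⟩ => ⟨K, PatchedAt.symm h⟩, trans⟩,
    fun _ _ _ _ _ _ => trans⟩

/-- Lemma 2.2.1: the patching relation on the disjoint union of the charts of a
patchable pair is an equivalence relation; in particular it is transitive. -/
theorem patchable_rel_equivalence {N : Type*} [Fintype N] [DecidableEq N]
    (X : Finset N → Type*)
    (D : ∀ _I _K : Finset N, Set (X _I))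
    (φ : ∀ _I _K : Finset N, X _I → X _K)
    (h0 : ∀ I : Finset N, D I I = Set.univ ∧ ∀ x : X I, φ I I x = x)
    (h1 : ∀ I K K' : Finset N, K' ⊆ K → K ⊆ I → D I K ⊆ D I K')
    (h2 : ∀ I K K' : Finset N, K' ⊆ K → K ⊆ I → ∀ x ∈ D I K,
      φ I K x ∈ D K K' ∧ φ I K' x = φ K K' (φ I K x)) :
    Equivalence (fun p q : (I : Finset N) × X I =>
      ∃ K : Finset N, K ⊆ p.1 ∩ q.1 ∧ p.2 ∈ D p.1 K ∧ q.2 ∈ D q.1 K ∧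
        φ p.1 K p.2 = φ q.1 K q.2) ∧
    (∀ (I J K : Finset N) (x : X I) (y : X J) (z : X K),
      (∃ K₁ : Finset N, K₁ ⊆ I ∩ J ∧ x ∈ D I K₁ ∧ y ∈ D J K₁ ∧
          φ I K₁ x = φ J K₁ y) →
      (∃ K₂ : Finset N, K₂ ⊆ J ∩ K ∧ y ∈ D J K₂ ∧ z ∈ D K K₂ ∧
          φ J K₂ y = φ K K₂ z) →
      (∃ K₃ : Finset N, K₃ ⊆ I ∩ K ∧ x ∈ D I K₃ ∧ z ∈ D K K₃ ∧
          φ I K₃ x = φ K K₃ z)) :=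
  patchable_rel_equivalence_general X D φ h0 h1 h2
end

section
/- Assume U_i° ⊆ U_i for every i ∈ {1,…,n}. For each I ⊆ {1,…,n} set P_I = X_I ∖ ⋃_{J⊊I} X_J. Then the sets P_I, I ⊆ {1,…,n}, are pairwise disjoint and ⋃_{I⊆{1,…,n}} P_I = X; that is, {P_I} is a partition of X. -/
/-! Each point `x` lies in exactly one piece, namely `P_I` for `I = {i | x ∈ U_i°}`:
every chart containing `x` has an index set containing this `I`, and when `U_i° ⊆ U_i`
the chart `X_I` itself contains `x`. So `P_I` is the fibre over `I` of `x ↦ {i | x ∈ U_i°}`. -/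

/-- The chart `X_I = (⋂_{i∈I} U_i) ∩ (⋂_{j∉I} (X ∖ U_j°))` of Example 2.3.1. -/
def chart {X : Type*} (n : ℕ) (U Uo : Fin n → Set X) (I : Finset (Fin n)) : Set X :=
  (⋂ i ∈ I, U i) ∩ (⋂ j ∈ Iᶜ, (Uo j)ᶜ)

/-- The pieces `P_I = X_I ∖ ⋃_{J⊊I} X_J`. -/
def chartPiece {X : Type*} (n : ℕ) (U Uo : Fin n → Set X) (I : Finset (Fin n)) : Set X :=
  chart n U Uo I \ ⋃ (J : Finset (Fin n)) (_ : J ⊂ I), chart n U Uo J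

section

variable {X : Type*} {n : ℕ} (U : Fin n → Set X) {Uo : Fin n → Set X}

open Classical in
noncomputable def chartIndex (Uo : Fin n → Set X) (x : X) : Finset (Fin n) :=
  {i | x ∈ Uo i}

@[simp]
theorem mem_chartIndex {x : X} {i : Fin n} : i ∈ chartIndex Uo x ↔ x ∈ Uo i := by
  simp [chartIndex]

theorem mem_chart_iff {x : X} {I : Finset (Fin n)} :
    x ∈ chart n U Uo I ↔ (∀ i ∈ I, x ∈ U i) ∧ ∀ j ∉ I, x ∉ Uo j := by
  simp [chart]

theorem chartIndex_subset_of_mem_chart {x : X} {I : Finset (Fin n)}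
    (hx : x ∈ chart n U Uo I) : chartIndex Uo x ⊆ I := fun i hi ↦ by
  by_contra hiI
  exact (mem_chart_iff U).1 hx |>.2 i hiI (mem_chartIndex.1 hi)

theorem mem_chart_chartIndex (h : ∀ i, Uo i ⊆ U i) (x : X) :
    x ∈ chart n U Uo (chartIndex Uo x) :=
  (mem_chart_iff U).2
    ⟨fun i hi ↦ h i (mem_chartIndex.1 hi), fun _ hj hx ↦ hj (mem_chartIndex.2 hx)⟩

theorem chartPiece_eq_preimage_chartIndex (h : ∀ i, Uo i ⊆ U i) (I : Finset (Fin n)) :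
    chartPiece n U Uo I = chartIndex Uo ⁻¹' {I} := by
  ext x
  simp only [chartPiece, Set.mem_sdiff, Set.mem_iUnion, Set.mem_preimage,
    Set.mem_singleton_iff, not_exists]
  constructor
  · rintro ⟨hxI, hnot⟩
    obtain heq | hlt := (chartIndex_subset_of_mem_chart U hxI).eq_or_ssubset
    · exact heq
    · exact absurd (mem_chart_chartIndex U h x) (hnot _ hlt)
  · rintro rfl
    exact ⟨mem_chart_chartIndex U h x,
      fun J hJ hxJ ↦ hJ.not_subset (chartIndex_subset_of_mem_chart U hxJ)⟩

end

theorem chartPiece_partition_general {X : Type*} (n : ℕ)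
    (U Uo : Fin n → Set X) (h : ∀ i, Uo i ⊆ U i) :
    (Pairwise fun I J : Finset (Fin n) =>
        Disjoint (chartPiece n U Uo I) (chartPiece n U Uo J)) ∧
    ⋃ I : Finset (Fin n), chartPiece n U Uo I = Set.univ := by
  simp only [chartPiece_eq_preimage_chartIndex U h]
  refine ⟨pairwise_disjoint_fiber (chartIndex Uo), ?_⟩
  rw [← Set.preimage_iUnion, Set.iUnion_of_singleton, Set.preimage_univ]

/-- If `U_i° ⊆ U_i` for all `i`, the sets `P_I = X_I ∖ ⋃_{J⊊I} X_J` are pairwise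
disjoint and cover `X` (Section 2.4 of the paper, in Example 2.3.1). -/
theorem chartPiece_partition {X : Type*} (n : ℕ) (hn : 0 < n)
    (U Uo : Fin n → Set X) (h : ∀ i, Uo i ⊆ U i) :
    (Pairwise fun I J : Finset (Fin n) =>
        Disjoint (chartPiece n U Uo I) (chartPiece n U Uo J)) ∧
    ⋃ I : Finset (Fin n), chartPiece n U Uo I = Set.univ :=
  chartPiece_partition_general n U Uo h
end
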